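/- arXiv:2103.12093 — 5 statements merged into one kernel-verified Lean document; each statement's English description precedes it below -/
import Mathlib

section
/- Let T be a closed subset of [0,1] containing 0 and 1, let ρ̄ be the backward jump map extended to [0,1] (ρ̄(t) = sup{u ∈ T : u < t} for t > 0, ρ̄(0)=0), and let λ_Δ be the pushforward of Lebesgue measure on [0,1] under ρ̄. Then λ_Δ is a Borel probability measure on T, and for s,t ∈ T with s < t, λ_Δ([s,t] ∩ T) = σ̄(t) − s, where σ̄(t) = inf{u ∈ T : u > t} for t < 1 and σ̄(1) = 1. -/
open MeasureTheory Set
open scoped ENNReal Classical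

noncomputable def rhoBar (T : Set ℝ) (t : ℝ) : ℝ :=
  if t = 0 then 0 else sSup {u | u ∈ T ∧ u < t}

noncomputable def sigmaBar (T : Set ℝ) (t : ℝ) : ℝ :=
  if t = 1 then 1 else sInf {u | u ∈ T ∧ t < u}

noncomputable def lamDelta (T : Set ℝ) : Measure ℝ :=
  Measure.map (rhoBar T) (volume.restrict (Icc 0 1))

theorem stmt_2 (T : Set ℝ) (hT : IsClosed T) (hTsub : T ⊆ Icc 0 1)
    (h0T : (0:ℝ) ∈ T) (h1T : (1:ℝ) ∈ T) :
    IsProbabilityMeasure (lamDelta T) ∧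
    ∀ s ∈ T, ∀ t ∈ T, s < t →
      lamDelta T (Icc s t ∩ T) = ENNReal.ofReal (sigmaBar T t - s) := by
  have hbdd : ∀ z : ℝ, BddAbove {u | u ∈ T ∧ u < z} :=
    fun z => ⟨1, fun u hu => (hTsub hu.1).2⟩
  have hempty : ∀ z : ℝ, z ≤ 0 → {u | u ∈ T ∧ u < z} = ∅ := by
    intro z hz
    ext u
    simp only [mem_setOf_eq, mem_empty_iff_false, iff_false, not_and]
    intro hu
    exact not_lt.2 (hz.trans (hTsub hu).1)
  have hsupnn : ∀ z : ℝ, 0 < z → (0:ℝ) ≤ sSup {u | u ∈ T ∧ u < z} :=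
    fun z hz => le_csSup (hbdd z) ⟨h0T, hz⟩
  have hmono : Monotone (rhoBar T) := by
    intro x y hxy
    unfold rhoBar
    split_ifs with hx hy hy
    · exact le_refl 0
    · rcases lt_or_ge 0 y with h | h
      · exact hsupnn y h
      · rw [hempty y h, Real.sSup_empty]
    · rw [hempty x (hxy.trans_eq hy), Real.sSup_empty]
    · rcases le_or_gt x 0 with h | h
      · rw [hempty x h, Real.sSup_empty]
        rcases le_or_gt y 0 with h' | h'
        · rw [hempty y h', Real.sSup_empty]
        · exact hsupnn y h'
      · exact csSup_le_csSup (hbdd y) ⟨0, h0T, h⟩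
          (fun u hu => ⟨hu.1, lt_of_lt_of_le hu.2 hxy⟩)
  have hmeas : Measurable (rhoBar T) := hmono.measurable
  constructor
  · constructor
    rw [lamDelta, Measure.map_apply hmeas MeasurableSet.univ, preimage_univ,
      Measure.restrict_apply_univ]
    simp [Real.volume_Icc]
  · intro s hs t ht hst
    have hs0 : (0:ℝ) ≤ s := (hTsub hs).1
    have ht1 : t ≤ 1 := (hTsub ht).2
    set st := sigmaBar T t with hstdef
    have hst1 : st ≤ 1 := by
      rw [hstdef, sigmaBar]
      split_ifs with h
      · exact le_refl 1
      · exact csInf_le ⟨0, fun u hu => (hTsub hu.1).1⟩ ⟨h1T, lt_of_le_of_ne ht1 h⟩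
    have htst : t ≤ st := by
      rw [hstdef, sigmaBar]
      split_ifs with h
      · exact h.le
      · exact le_csInf ⟨1, h1T, lt_of_le_of_ne ht1 h⟩ (fun u hu => hu.2.le)
    have keyA : Ioc s st ⊆ rhoBar T ⁻¹' (Icc s t ∩ T) := by
      intro x hx
      have hxpos : 0 < x := lt_of_le_of_lt hs0 hx.1
      have hxne : x ≠ 0 := ne_of_gt hxpos
      have hrho : rhoBar T x = sSup {u | u ∈ T ∧ u < x} := by
        rw [rhoBar, if_neg hxne]
      have hne : {u | u ∈ T ∧ u < x}.Nonempty := ⟨s, hs, hx.1⟩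
      have hmem : sSup {u | u ∈ T ∧ u < x} ∈ T := by
        have h1 := csSup_mem_closure hne (hbdd x)
        have h2 : closure {u | u ∈ T ∧ u < x} ⊆ T :=
          (closure_mono (show {u | u ∈ T ∧ u < x} ⊆ T from fun u hu => hu.1)).trans
            hT.closure_eq.subset
        exact h2 h1
      have hge : s ≤ sSup {u | u ∈ T ∧ u < x} := le_csSup (hbdd x) ⟨hs, hx.1⟩
      have hle : sSup {u | u ∈ T ∧ u < x} ≤ t := by
        apply csSup_le hne
        intro u hu
        by_contra hut
        push_neg at hut
        rcases eq_or_ne t 1 with h | h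
        · exact absurd ((hTsub hu.1).2) (not_le.2 (h ▸ hut))
        · have h1 : st ≤ u := by
            rw [hstdef, sigmaBar, if_neg h]
            exact csInf_le ⟨0, fun v hv => (hTsub hv.1).1⟩ ⟨hu.1, hut⟩
          exact absurd (lt_of_lt_of_le hu.2 hx.2) (not_lt.2 h1)
      rw [mem_preimage, hrho]
      exact ⟨⟨hge, hle⟩, hmem⟩
    have keyB : rhoBar T ⁻¹' (Icc s t ∩ T) ∩ Icc 0 1 ⊆ Icc s st := by
      rintro x ⟨hxA, hx01⟩
      rcases eq_or_ne x 0 with hx0 | hx0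
      · have hr0 : rhoBar T x = 0 := by rw [rhoBar, if_pos hx0]
        have hsx : s ≤ 0 := hr0 ▸ hxA.1.1
        constructor
        · rw [hx0]; exact hsx
        · rw [hx0]; exact le_trans hs0 (hst.le.trans htst)
      · have hxpos : 0 < x := lt_of_le_of_ne hx01.1 (Ne.symm hx0)
        have hrho : rhoBar T x = sSup {u | u ∈ T ∧ u < x} := by
          rw [rhoBar, if_neg hx0]
        have hne : {u | u ∈ T ∧ u < x}.Nonempty := ⟨0, h0T, hxpos⟩
        have hsupx : sSup {u | u ∈ T ∧ u < x} ≤ x := csSup_le hne (fun u hu => hu.2.le)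
        have hsx : s ≤ x := le_trans (hrho ▸ hxA.1.1) hsupx
        refine ⟨hsx, ?_⟩
        by_contra hxst
        push_neg at hxst
        rcases eq_or_ne t 1 with h | h
        · rw [hstdef, sigmaBar, if_pos h] at hxst
          exact absurd hx01.2 (not_le.2 hxst)
        · have hne' : {u | u ∈ T ∧ t < u}.Nonempty := ⟨1, h1T, lt_of_le_of_ne ht1 h⟩
          have hlt : sInf {u | u ∈ T ∧ t < u} < x := by
            rw [hstdef, sigmaBar, if_neg h] at hxst; exact hxst
          obtain ⟨u, hu, hux⟩ := exists_lt_of_csInf_lt hne' hlt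
          have hule : u ≤ sSup {u | u ∈ T ∧ u < x} := le_csSup (hbdd x) ⟨hu.1, hux⟩
          have htle : sSup {u | u ∈ T ∧ u < x} ≤ t := hrho ▸ hxA.1.2
          exact absurd (lt_of_lt_of_le hu.2 (hule.trans htle)) (lt_irrefl t)
    have hAmeas : MeasurableSet (Icc s t ∩ T) := measurableSet_Icc.inter hT.measurableSet
    rw [lamDelta, Measure.map_apply hmeas hAmeas, Measure.restrict_apply (hmeas hAmeas)]
    have hsub1 : Ioc s st ⊆ rhoBar T ⁻¹' (Icc s t ∩ T) ∩ Icc 0 1 := by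
      intro x hx
      exact ⟨keyA hx, ⟨hs0.trans hx.1.le, hx.2.trans hst1⟩⟩
    have h1 : volume (Ioc s st) ≤ volume (rhoBar T ⁻¹' (Icc s t ∩ T) ∩ Icc 0 1) :=
      measure_mono hsub1
    have h2 : volume (rhoBar T ⁻¹' (Icc s t ∩ T) ∩ Icc 0 1) ≤ volume (Icc s st) :=
      measure_mono keyB
    rw [Real.volume_Ioc] at h1
    rw [Real.volume_Icc] at h2
    exact le_antisymm h2 h1
end

section
/- Let T be a closed subset of [0,1] containing 0 and 1, and let λ_Δ be the Guseinov measure (pushforward of Lebesgue measure under the extended backward jump map ρ̄). Then for every t ∈ T, λ_Δ({t}) = σ̄(t) − t (the graininess of t), where σ̄(t) = inf{u ∈ T : u > t} for t < 1 and σ̄(1) = 1. -/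
open MeasureTheory Set
open scoped ENNReal Classical

lemma rhoBar_mono (T : Set ℝ) (hTsub : T ⊆ Icc 0 1) (h0T : (0:ℝ) ∈ T) :
    Monotone (rhoBar T) := by
  have hbdd : ∀ s : ℝ, BddAbove {u | u ∈ T ∧ u < s} :=
    fun s => ⟨1, fun u hu => (hTsub hu.1).2⟩
  intro a b hab
  unfold rhoBar
  by_cases ha : a = 0 <;> by_cases hb : b = 0 <;> simp [ha, hb]
  · -- a = 0, b ≠ 0 : 0 ≤ sSup
    have hb0 : 0 < b := lt_of_le_of_ne (ha ▸ hab) (Ne.symm hb)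
    exact le_csSup (hbdd b) ⟨h0T, hb0⟩
  · -- a ≠ 0, b = 0 : sSup ≤ 0, a < 0 so set empty
    refine Real.sSup_le (fun u hu => ?_) le_rfl
    exact absurd (lt_of_lt_of_le hu.2 (hb ▸ hab)) (not_lt.2 (hTsub hu.1).1)
  · -- a ≠ 0, b ≠ 0
    refine Real.sSup_le (fun u hu => le_csSup (hbdd b) ⟨hu.1, lt_of_lt_of_le hu.2 hab⟩) ?_
    exact Real.sSup_nonneg (fun x hx => (hTsub hx.1).1)

theorem stmt_3 (T : Set ℝ) (hT : IsClosed T) (hTsub : T ⊆ Icc 0 1)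
    (h0T : (0:ℝ) ∈ T) (h1T : (1:ℝ) ∈ T) :
    ∀ t ∈ T, lamDelta T {t} = ENNReal.ofReal (sigmaBar T t - t) := by
  intro t ht
  have ht0 : 0 ≤ t := (hTsub ht).1
  have ht1 : t ≤ 1 := (hTsub ht).2
  have hbdd : ∀ s : ℝ, BddAbove {u | u ∈ T ∧ u < s} :=
    fun s => ⟨1, fun u hu => (hTsub hu.1).2⟩
  have hbddBelow : BddBelow {u | u ∈ T ∧ t < u} := ⟨0, fun u hu => (hTsub hu.1).1⟩
  have hmeas : Measurable (rhoBar T) := (rhoBar_mono T hTsub h0T).measurable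
  -- basic facts about sigmaBar
  have hσt : t ≤ sigmaBar T t := by
    unfold sigmaBar
    split_ifs with h1
    · exact h1 ▸ le_rfl
    · exact le_csInf ⟨1, h1T, lt_of_le_of_ne ht1 h1⟩ (fun u hu => hu.2.le)
  have hσ1 : sigmaBar T t ≤ 1 := by
    unfold sigmaBar
    split_ifs with h1
    · exact le_rfl
    · exact csInf_le hbddBelow ⟨h1T, lt_of_le_of_ne ht1 h1⟩
  have hmap : lamDelta T {t} = volume (rhoBar T ⁻¹' {t} ∩ Icc 0 1) := by
    rw [lamDelta, Measure.map_apply hmeas (measurableSet_singleton t),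
        Measure.restrict_apply (hmeas (measurableSet_singleton t))]
  -- lower inclusion
  have hsub1 : Ioc t (sigmaBar T t) ⊆ rhoBar T ⁻¹' {t} ∩ Icc 0 1 := by
    rintro s ⟨hts, hsσ⟩
    have hs0 : 0 < s := lt_of_le_of_lt ht0 hts
    refine ⟨?_, hs0.le, hsσ.trans hσ1⟩
    have : rhoBar T s = t := by
      rw [rhoBar, if_neg hs0.ne']
      refine le_antisymm (Real.sSup_le (fun u hu => ?_) ht0) (le_csSup (hbdd s) ⟨ht, hts⟩)
      by_contra h
      push_neg at h
      have h1 : t ≠ 1 := by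
        intro h1
        exact absurd (hTsub hu.1).2 (not_le.2 (h1 ▸ h))
      have : sigmaBar T t ≤ u := by
        rw [sigmaBar, if_neg h1]
        exact csInf_le hbddBelow ⟨hu.1, h⟩
      linarith [hu.2, hsσ]
    simpa using this
  -- upper inclusion
  have hsub2 : rhoBar T ⁻¹' {t} ∩ Icc 0 1 ⊆ Icc t (sigmaBar T t) := by
    rintro s ⟨hρ, hs0, hs1⟩
    have hρ' : rhoBar T s = t := hρ
    constructor
    · by_cases h0 : s = 0
      · rw [rhoBar, if_pos h0] at hρ'
        rw [h0, ← hρ']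
      · have hspos : 0 < s := lt_of_le_of_ne hs0 (Ne.symm h0)
        rw [rhoBar, if_neg h0] at hρ'
        rw [← hρ']
        exact Real.sSup_le (fun u hu => hu.2.le) hspos.le
    · by_contra h
      push_neg at h
      have h1 : t ≠ 1 := by
        intro h1
        rw [sigmaBar, if_pos h1] at h
        linarith
      rw [sigmaBar, if_neg h1] at h
      obtain ⟨u, hu, hus⟩ := exists_lt_of_csInf_lt (⟨1, h1T, lt_of_le_of_ne ht1 h1⟩ : Set.Nonempty {u | u ∈ T ∧ t < u}) h
      have hspos : 0 < s := lt_trans (lt_of_le_of_lt ht0 hu.2) hus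
      rw [rhoBar, if_neg hspos.ne'] at hρ'
      have : u ≤ t := hρ' ▸ le_csSup (hbdd s) ⟨hu.1, hus⟩
      linarith [hu.2]
  rw [hmap]
  refine le_antisymm ?_ ?_
  · calc volume (rhoBar T ⁻¹' {t} ∩ Icc 0 1) ≤ volume (Icc t (sigmaBar T t)) :=
          measure_mono hsub2
      _ = ENNReal.ofReal (sigmaBar T t - t) := Real.volume_Icc
  · calc ENNReal.ofReal (sigmaBar T t - t) = volume (Ioc t (sigmaBar T t)) :=
          Real.volume_Ioc.symm
      _ ≤ volume (rhoBar T ⁻¹' {t} ∩ Icc 0 1) := measure_mono hsub1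
end

section
/- Let T be a closed subset of [0,1] containing 0 and 1, and let λ_Δ be the Guseinov measure on T (pushforward of Lebesgue measure under ρ̄). Then λ_Δ admits the Lebesgue decomposition λ_Δ = λ|_{B(T)} + Σ_{t ∈ T_rs} μ̄_g(t) δ_t, where λ|_{B(T)} is the restriction of Lebesgue measure to Borel subsets of T, T_rs is the (at most countable) set of right-scattered points, μ̄_g(t) = σ̄(t) − t is the graininess, and δ_t is the Dirac measure at t. -/
open MeasureTheory Set
open scoped ENNReal Classical

namespace Stmt7Aux

variable {T : Set ℝ}

lemma bddAbove_lo (hTsub : T ⊆ Icc 0 1) (t : ℝ) : BddAbove {u | u ∈ T ∧ u < t} :=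
  ⟨1, fun u hu => (hTsub hu.1).2⟩

lemma rhoBar_nonneg (hTsub : T ⊆ Icc 0 1) (t : ℝ) : 0 ≤ rhoBar T t := by
  unfold rhoBar
  split
  · exact le_refl 0
  · exact Real.sSup_nonneg (fun x hx => (hTsub hx.1).1)

lemma rhoBar_mem (hT : IsClosed T) (hTsub : T ⊆ Icc 0 1) (h0T : (0:ℝ) ∈ T) (t : ℝ) :
    rhoBar T t ∈ T := by
  unfold rhoBar
  split
  · exact h0T
  · rcases Set.eq_empty_or_nonempty {u | u ∈ T ∧ u < t} with he | hne
    · rw [he, Real.sSup_empty]; exact h0T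
    · have h1 : closure {u | u ∈ T ∧ u < t} ⊆ closure T := closure_mono (fun u hu => hu.1)
      rw [hT.closure_eq] at h1
      exact h1 (csSup_mem_closure hne (bddAbove_lo hTsub t))

lemma rhoBar_le (t : ℝ) (ht : 0 ≤ t) : rhoBar T t ≤ t := by
  unfold rhoBar
  split
  · exact ht
  · rcases Set.eq_empty_or_nonempty {u | u ∈ T ∧ u < t} with he | hne
    · rw [he, Real.sSup_empty]; exact ht
    · exact csSup_le hne (fun u hu => hu.2.le)

lemma rhoBar_mono (hTsub : T ⊆ Icc 0 1) (h0T : (0:ℝ) ∈ T) : Monotone (rhoBar T) := by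
  intro a b hab
  by_cases hb : b = 0
  · subst hb
    by_cases ha : a = 0
    · simp [rhoBar, ha]
    · have ha' : a < 0 := lt_of_le_of_ne hab ha
      have he : {u | u ∈ T ∧ u < a} = ∅ := by
        ext u; simp only [Set.mem_setOf_eq, Set.mem_empty_iff_false, iff_false]
        rintro ⟨hu, hua⟩
        exact absurd (hTsub hu).1 (by linarith)
      simp [rhoBar, ha, he, Real.sSup_empty]
  · rw [show rhoBar T b = sSup {u | u ∈ T ∧ u < b} from if_neg hb]
    by_cases ha : a = 0
    · rw [show rhoBar T a = 0 from if_pos ha]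
      exact Real.sSup_nonneg (fun x hx => (hTsub hx.1).1)
    · rw [show rhoBar T a = sSup {u | u ∈ T ∧ u < a} from if_neg ha]
      rcases Set.eq_empty_or_nonempty {u | u ∈ T ∧ u < a} with he | hne
      · rw [he, Real.sSup_empty]
        exact Real.sSup_nonneg (fun x hx => (hTsub hx.1).1)
      · exact csSup_le_csSup (bddAbove_lo hTsub b) hne
          (fun u hu => ⟨hu.1, lt_of_lt_of_le hu.2 hab⟩)

lemma hi_nonempty (hTsub : T ⊆ Icc 0 1) (h1T : (1:ℝ) ∈ T) {t : ℝ} (ht : t ∈ T) (h1 : t ≠ 1) :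
    ({u | u ∈ T ∧ t < u}).Nonempty :=
  ⟨1, h1T, lt_of_le_of_ne (hTsub ht).2 h1⟩

lemma hi_bddBelow (hTsub : T ⊆ Icc 0 1) (t : ℝ) : BddBelow {u | u ∈ T ∧ t < u} :=
  ⟨0, fun u hu => (hTsub hu.1).1⟩

lemma sigmaBar_mem (hT : IsClosed T) (hTsub : T ⊆ Icc 0 1) (h1T : (1:ℝ) ∈ T)
    {t : ℝ} (ht : t ∈ T) (h1 : t ≠ 1) : sigmaBar T t ∈ T := by
  rw [show sigmaBar T t = sInf {u | u ∈ T ∧ t < u} from if_neg h1]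
  have hcl : closure {u | u ∈ T ∧ t < u} ⊆ closure T := closure_mono (fun u hu => hu.1)
  rw [hT.closure_eq] at hcl
  exact hcl (csInf_mem_closure (hi_nonempty hTsub h1T ht h1) (hi_bddBelow hTsub t))

lemma sigmaBar_le_of_mem (hTsub : T ⊆ Icc 0 1) {t u : ℝ} (h1 : t ≠ 1) (hu : u ∈ T)
    (htu : t < u) : sigmaBar T t ≤ u := by
  rw [show sigmaBar T t = sInf {u | u ∈ T ∧ t < u} from if_neg h1]
  exact csInf_le (hi_bddBelow hTsub t) ⟨hu, htu⟩

lemma sigmaBar_le_one (hTsub : T ⊆ Icc 0 1) (h1T : (1:ℝ) ∈ T) {t : ℝ} (ht : t ∈ T)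
    (h1 : t ≠ 1) : sigmaBar T t ≤ 1 :=
  sigmaBar_le_of_mem hTsub h1 h1T (lt_of_le_of_ne (hTsub ht).2 h1)

/-- the set of right-scattered points -/
def RS (T : Set ℝ) : Set ℝ := {t : ℝ | t ∈ T ∧ t ≠ 1 ∧ t < sigmaBar T t}

/-- on a gap, rhoBar is constantly the left endpoint -/
lemma gap_rho (hTsub : T ⊆ Icc 0 1) {t x : ℝ} (ht : t ∈ RS T)
    (hx : x ∈ Ioo t (sigmaBar T t)) : rhoBar T x = t := by
  have hx0 : x ≠ 0 := by
    have h1 : (0:ℝ) ≤ t := (hTsub ht.1).1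
    have h2 := hx.1; intro h; rw [h] at h2; linarith
  rw [show rhoBar T x = sSup {u | u ∈ T ∧ u < x} from if_neg hx0]
  apply le_antisymm
  · apply csSup_le (⟨t, ⟨ht.1, hx.1⟩⟩ : Set.Nonempty {u | u ∈ T ∧ u < x})
    intro u hu
    by_contra hlt
    push_neg at hlt
    have := sigmaBar_le_of_mem hTsub ht.2.1 hu.1 hlt
    linarith [hu.2, hx.2]
  · exact le_csSup (bddAbove_lo hTsub x) ⟨ht.1, hx.1⟩

lemma gap_subset (hTsub : T ⊆ Icc 0 1) (h1T : (1:ℝ) ∈ T) {t : ℝ} (ht : t ∈ RS T) :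
    Ioo t (sigmaBar T t) ⊆ Icc 0 1 := by
  intro x hx
  exact ⟨le_of_lt (lt_of_le_of_lt (hTsub ht.1).1 hx.1),
    le_of_lt (lt_of_lt_of_le hx.2 (sigmaBar_le_one hTsub h1T ht.1 ht.2.1))⟩

lemma gap_disjoint_T (hTsub : T ⊆ Icc 0 1) {t : ℝ} (ht : t ∈ RS T) :
    Disjoint (Ioo t (sigmaBar T t)) T := by
  rw [Set.disjoint_left]
  rintro x ⟨hx1, hx2⟩ hxT
  exact absurd (sigmaBar_le_of_mem hTsub ht.2.1 hxT hx1) (not_le.mpr hx2)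

lemma gap_pairwise (hTsub : T ⊆ Icc 0 1) {s t : ℝ} (hs : s ∈ RS T) (ht : t ∈ RS T)
    (hst : s ≠ t) : Disjoint (Ioo s (sigmaBar T s)) (Ioo t (sigmaBar T t)) := by
  rcases lt_or_gt_of_ne hst with h | h
  · have h1 : sigmaBar T s ≤ t := sigmaBar_le_of_mem hTsub hs.2.1 ht.1 h
    rw [Set.disjoint_left]
    rintro x ⟨_, hx2⟩ ⟨hx3, _⟩
    linarith
  · have h1 : sigmaBar T t ≤ s := sigmaBar_le_of_mem hTsub ht.2.1 hs.1 h
    rw [Set.disjoint_left]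
    rintro x ⟨hx1, _⟩ ⟨_, hx4⟩
    linarith

/-- cover of [0,1] by T and gaps -/
lemma cover (hT : IsClosed T) (hTsub : T ⊆ Icc 0 1) (h0T : (0:ℝ) ∈ T) (h1T : (1:ℝ) ∈ T)
    {x : ℝ} (hx : x ∈ Icc 0 1) (hxT : x ∉ T) :
    ∃ t ∈ RS T, x ∈ Ioo t (sigmaBar T t) := by
  have hx0 : x ≠ 0 := fun h => hxT (h ▸ h0T)
  set a := rhoBar T x with ha
  have haT : a ∈ T := rhoBar_mem hT hTsub h0T x
  have halex : a ≤ x := rhoBar_le x hx.1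
  have haltx : a < x := lt_of_le_of_ne halex (fun h => hxT (h ▸ haT))
  have ha1 : a ≠ 1 := by intro h; rw [h] at haltx; linarith [hx.2]
  have hkey : ∀ u ∈ T, a < u → x ≤ u := by
    intro u hu hau
    by_contra hlt
    push_neg at hlt
    have h2 : u ≤ a := by
      rw [ha, show rhoBar T x = sSup {u | u ∈ T ∧ u < x} from if_neg hx0]
      exact le_csSup (bddAbove_lo hTsub x) ⟨hu, hlt⟩
    linarith
  have hsig : x ≤ sigmaBar T a := by
    rw [show sigmaBar T a = sInf {u | u ∈ T ∧ a < u} from if_neg ha1]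
    exact le_csInf (hi_nonempty hTsub h1T haT ha1) (fun u hu => hkey u hu.1 hu.2)
  have hsigT : sigmaBar T a ∈ T := sigmaBar_mem hT hTsub h1T haT ha1
  have hsiggt : x < sigmaBar T a := lt_of_le_of_ne hsig (fun h => hxT (h ▸ hsigT))
  exact ⟨a, ⟨haT, ha1, lt_trans haltx hsiggt⟩, haltx, hsiggt⟩

lemma RS_countable (hTsub : T ⊆ Icc 0 1) : (RS T).Countable := by
  have h : ∀ t : RS T, ∃ q : ℚ, (t:ℝ) < q ∧ (q:ℝ) < sigmaBar T (t:ℝ) :=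
    fun t => exists_rat_btwn t.2.2.2
  choose f hf using h
  have hinj : Function.Injective f := by
    intro s t hst
    ext
    by_contra hne
    have hd := gap_pairwise hTsub s.2 t.2 hne
    rw [Set.disjoint_left] at hd
    exact hd ⟨(hf s).1, (hf s).2⟩ ⟨hst ▸ (hf t).1, hst ▸ (hf t).2⟩
  exact Set.countable_coe_iff.mp hinj.countable

/-- rhoBar fixes points of T except a countable set -/
lemma bad_countable (hT : IsClosed T) (hTsub : T ⊆ Icc 0 1) (h0T : (0:ℝ) ∈ T)
    (h1T : (1:ℝ) ∈ T) : ({x | x ∈ T ∧ rhoBar T x ≠ x}).Countable := by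
  apply Set.Countable.mono _ (Set.Countable.insert 0
    ((RS_countable (T := T) hTsub).image (fun t => sigmaBar T t)))
  rintro x ⟨hxT, hxne⟩
  by_cases hx0 : x = 0
  · exact Or.inl hx0
  · right
    have hxpos : 0 < x := lt_of_le_of_ne (hTsub hxT).1 (Ne.symm hx0)
    set a := rhoBar T x with ha
    have haT : a ∈ T := rhoBar_mem hT hTsub h0T x
    have haltx : a < x := lt_of_le_of_ne (rhoBar_le x hxpos.le) hxne
    have ha1 : a ≠ 1 := by intro h; rw [h] at haltx; linarith [(hTsub hxT).2]
    have hkey : ∀ u ∈ T, a < u → x ≤ u := by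
      intro u hu hau
      by_contra hlt
      push_neg at hlt
      have h2 : u ≤ a := by
        rw [ha, show rhoBar T x = sSup {u | u ∈ T ∧ u < x} from if_neg hx0]
        exact le_csSup (bddAbove_lo hTsub x) ⟨hu, hlt⟩
      linarith
    have hsig : sigmaBar T a = x := by
      apply le_antisymm
      · exact sigmaBar_le_of_mem hTsub ha1 hxT haltx
      · rw [show sigmaBar T a = sInf {u | u ∈ T ∧ a < u} from if_neg ha1]
        exact le_csInf (hi_nonempty hTsub h1T haT ha1) (fun u hu => hkey u hu.1 hu.2)
    exact ⟨a, ⟨haT, ha1, by rw [hsig]; exact haltx⟩, hsig⟩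

end Stmt7Aux

open Stmt7Aux in
theorem stmt_7 (T : Set ℝ) (hT : IsClosed T) (hTsub : T ⊆ Icc 0 1)
    (h0T : (0:ℝ) ∈ T) (h1T : (1:ℝ) ∈ T) :
    ∀ A : Set ℝ, MeasurableSet A →
      lamDelta T A = volume (A ∩ T) +
        ∑' t : {t : ℝ | t ∈ T ∧ t ≠ 1 ∧ t < sigmaBar T t},
          Set.indicator A (fun _ => ENNReal.ofReal (sigmaBar T (t:ℝ) - (t:ℝ))) (t:ℝ) := by
  intro A hA
  have hrho : Measurable (rhoBar T) := (rhoBar_mono hTsub h0T).measurable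
  have hmap : lamDelta T A = volume (rhoBar T ⁻¹' A ∩ Icc 0 1) := by
    rw [lamDelta, Measure.map_apply hrho hA, Measure.restrict_apply (hrho hA)]
  set S : Set ℝ := rhoBar T ⁻¹' A ∩ Icc 0 1 with hS
  haveI hcnt : Countable (RS T) := Set.countable_coe_iff.mpr (RS_countable hTsub)
  have hSmeas : MeasurableSet S := (hrho hA).inter measurableSet_Icc
  have hdecomp : S = (S ∩ T) ∪ ⋃ t : RS T, (S ∩ Ioo (t:ℝ) (sigmaBar T t)) := by
    apply Set.Subset.antisymm
    · intro x hx
      by_cases hxT : x ∈ T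
      · exact Or.inl ⟨hx, hxT⟩
      · obtain ⟨t, htRS, hxt⟩ := cover hT hTsub h0T h1T hx.2 hxT
        exact Or.inr (Set.mem_iUnion.mpr ⟨⟨t, htRS⟩, hx, hxt⟩)
    · rintro x (hx | hx)
      · exact hx.1
      · obtain ⟨t, hxt⟩ := Set.mem_iUnion.mp hx
        exact hxt.1
  have hdisj : Disjoint (S ∩ T) (⋃ t : RS T, (S ∩ Ioo (t:ℝ) (sigmaBar T t))) := by
    rw [Set.disjoint_left]
    rintro x ⟨_, hxT⟩ hx
    obtain ⟨t, hxt⟩ := Set.mem_iUnion.mp hx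
    exact (Set.disjoint_right.mp (gap_disjoint_T hTsub t.2) hxT) hxt.2
  have hgapmeas : ∀ t : RS T, MeasurableSet (S ∩ Ioo (t:ℝ) (sigmaBar T t)) :=
    fun t => hSmeas.inter measurableSet_Ioo
  have hvol : volume S = volume (S ∩ T) +
      ∑' t : RS T, volume (S ∩ Ioo (t:ℝ) (sigmaBar T t)) := by
    conv_lhs => rw [hdecomp]
    rw [measure_union hdisj (MeasurableSet.iUnion hgapmeas),
      measure_iUnion ?_ hgapmeas]
    intro s t hst
    exact (gap_pairwise hTsub s.2 t.2 (fun h => hst (Subtype.ext h))).mono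
      Set.inter_subset_right Set.inter_subset_right
  have hN0 : volume {x | x ∈ T ∧ rhoBar T x ≠ x} = 0 :=
    (bad_countable hT hTsub h0T h1T).measure_zero _
  have hST : volume (S ∩ T) = volume (A ∩ T) := by
    apply measure_congr
    rw [MeasureTheory.ae_eq_set]
    constructor
    · apply measure_mono_null _ hN0
      rintro x ⟨⟨⟨hxA, _⟩, hxT⟩, hxn⟩
      exact ⟨hxT, fun h => hxn ⟨h ▸ hxA, hxT⟩⟩
    · apply measure_mono_null _ hN0
      rintro x ⟨⟨hxA, hxT⟩, hxn⟩
      exact ⟨hxT, fun h => hxn ⟨⟨show rhoBar T x ∈ A by rw [h]; exact hxA, hTsub hxT⟩, hxT⟩⟩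
  have hgap : ∀ t : RS T, volume (S ∩ Ioo (t:ℝ) (sigmaBar T t)) =
      Set.indicator A (fun _ => ENNReal.ofReal (sigmaBar T (t:ℝ) - (t:ℝ))) (t:ℝ) := by
    intro t
    by_cases htA : (t:ℝ) ∈ A
    · have heq : S ∩ Ioo (t:ℝ) (sigmaBar T t) = Ioo (t:ℝ) (sigmaBar T t) := by
        apply Set.inter_eq_self_of_subset_right
        intro x hx
        refine ⟨?_, gap_subset hTsub h1T t.2 hx⟩
        show rhoBar T x ∈ A
        rw [gap_rho hTsub t.2 hx]
        exact htA
      rw [heq, Real.volume_Ioo, Set.indicator_of_mem htA]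
    · have heq : S ∩ Ioo (t:ℝ) (sigmaBar T t) = ∅ := by
        ext x
        simp only [Set.mem_inter_iff, Set.mem_empty_iff_false, iff_false]
        rintro ⟨⟨hxA, _⟩, hx⟩
        rw [Set.mem_preimage, gap_rho hTsub t.2 hx] at hxA
        exact htA hxA
      rw [heq, measure_empty, Set.indicator_of_notMem htA]
  rw [hmap]
  calc volume S = volume (S ∩ T) + ∑' t : RS T, volume (S ∩ Ioo (t:ℝ) (sigmaBar T t)) := hvol
    _ = volume (A ∩ T) + ∑' t : RS T,
          Set.indicator A (fun _ => ENNReal.ofReal (sigmaBar T (t:ℝ) - (t:ℝ))) (t:ℝ) := by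
        rw [hST]; congr 1; exact tsum_congr hgap
end

section
/- Let T be a closed subset of [0,1] containing 0 and 1 and λ_Δ the Guseinov measure on T. For every f ∈ L¹(λ_Δ), ∫_T f(t) dλ_Δ(t) = ∫_{[0,1]} f(sup([0,t] ∩ T)) dλ(t), where λ is Lebesgue measure and sup([0,0] ∩ T) is interpreted as 0. -/
open MeasureTheory Set
open scoped ENNReal Classical

theorem stmt_8 (T : Set ℝ) (hT : IsClosed T) (hTsub : T ⊆ Icc 0 1)
    (h0T : (0:ℝ) ∈ T) (h1T : (1:ℝ) ∈ T) :
    ∀ f : ℝ → ℝ, Integrable f (lamDelta T) →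
      ∫ x, f x ∂(lamDelta T) = ∫ t in Icc (0:ℝ) 1, f (sSup (Icc 0 t ∩ T)) := by
  intro f hf
  set g : ℝ → ℝ := fun t => sSup (Icc 0 t ∩ T) with hg_def
  -- comparison of sups of subsets of [0,1]
  have key : ∀ s t : Set ℝ, (∀ x ∈ t, x ∈ Icc (0:ℝ) 1) → s ⊆ t → sSup s ≤ sSup t := by
    intro s t ht hst
    rcases s.eq_empty_or_nonempty with rfl | hs
    · rw [Real.sSup_empty]
      exact Real.sSup_nonneg (fun x hx => (ht x hx).1)
    · exact csSup_le_csSup ⟨1, fun u hu => (ht u hu).2⟩ hs hst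
  have hrho_eq : ∀ t : ℝ, rhoBar T t = sSup {u | u ∈ T ∧ u < t} := by
    intro t
    rw [rhoBar]
    split
    · rename_i h
      subst h
      have he : {u | u ∈ T ∧ u < (0:ℝ)} = ∅ := by
        ext u
        simp only [mem_setOf_eq, mem_empty_iff_false, iff_false, not_and, not_lt]
        intro hu
        exact (hTsub hu).1
      rw [he, Real.sSup_empty]
    · rfl
  have hmono_rho : Monotone (rhoBar T) := by
    intro a b hab
    rw [hrho_eq, hrho_eq]
    exact key _ _ (fun x hx => hTsub hx.1) (fun x hx => ⟨hx.1, lt_of_lt_of_le hx.2 hab⟩)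
  have hmono_g : Monotone g := by
    intro a b hab
    exact key _ _ (fun x hx => hTsub hx.2) (fun x hx => ⟨⟨hx.1.1, hx.1.2.trans hab⟩, hx.2⟩)
  -- if rhoBar and g differ at t, then g is discontinuous at t
  have hdisc : ∀ t : ℝ, rhoBar T t ≠ g t → ¬ContinuousAt g t := by
    intro t hne hcont
    rw [hrho_eq] at hne
    rcases lt_trichotomy t 0 with hlt | rfl | hpos
    · apply hne
      have h1 : {u | u ∈ T ∧ u < t} = ∅ := by
        ext u
        simp only [mem_setOf_eq, mem_empty_iff_false, iff_false, not_and, not_lt]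
        intro hu; linarith [(hTsub hu).1]
      have h2 : Icc 0 t ∩ T = ∅ := by
        ext u
        simp only [mem_inter_iff, mem_Icc, mem_empty_iff_false, iff_false]
        rintro ⟨⟨h0u, hut⟩, -⟩; linarith
      rw [hg_def]; simp only [h1, h2]
    · apply hne
      have h1 : {u | u ∈ T ∧ u < (0:ℝ)} = ∅ := by
        ext u
        simp only [mem_setOf_eq, mem_empty_iff_false, iff_false, not_and, not_lt]
        intro hu; exact (hTsub hu).1
      have h2 : Icc (0:ℝ) 0 ∩ T = {0} := by
        ext u
        simp only [Icc_self, mem_inter_iff, mem_singleton_iff]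
        constructor
        · rintro ⟨hu, -⟩; exact hu
        · rintro rfl; exact ⟨rfl, h0T⟩
      rw [hg_def]; simp only [h1, h2, Real.sSup_empty, csSup_singleton]
    by_cases htT : t ∈ T
    · -- t ∈ T, t > 0 : g t = t and sSup {u ∈ T, u < t} < t
      have hgt : g t = t := by
        rw [hg_def]
        refine le_antisymm (csSup_le ⟨t, ⟨le_of_lt hpos, le_refl t⟩, htT⟩
          (fun u hu => hu.1.2)) (le_csSup ⟨1, fun u hu => (hTsub hu.2).2⟩
          ⟨⟨le_of_lt hpos, le_refl t⟩, htT⟩)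
      set r := sSup {u | u ∈ T ∧ u < t} with hr
      have hr_le : r ≤ t := csSup_le ⟨0, h0T, hpos⟩ (fun u hu => le_of_lt hu.2)
      have hr_lt : r < t := lt_of_le_of_ne hr_le (by
        intro h; exact hne (by rw [h, hgt]))
      -- g s ≤ r for all s ∈ Ioo r t
      have hbound : ∀ s ∈ Ioo r t, g s ≤ r := by
        intro s hs
        rw [hg_def]
        refine csSup_le ⟨0, ⟨le_refl 0, ?_⟩, h0T⟩ ?_
        · have : (0:ℝ) ≤ r := Real.sSup_nonneg (fun u hu => (hTsub hu.1).1)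
          linarith [hs.1]
        · intro u hu
          exact le_csSup ⟨1, fun v hv => (hTsub hv.1).2⟩ ⟨hu.2, lt_of_le_of_lt hu.1.2 hs.2⟩
      have htend : Filter.Tendsto g (nhdsWithin t (Iio t)) (nhds (g t)) :=
        hcont.continuousWithinAt.tendsto
      rw [hgt] at htend
      have h1 : ∀ᶠ s in nhdsWithin t (Iio t), r < g s :=
        htend.eventually (eventually_gt_nhds hr_lt)
      have h2 : ∀ᶠ s in nhdsWithin t (Iio t), s ∈ Ioo r t :=
        Ioo_mem_nhdsLT_of_mem ⟨hr_lt, le_refl t⟩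
      have : ∀ᶠ s in nhdsWithin t (Iio t), False := by
        filter_upwards [h1, h2] with s hs1 hs2
        exact absurd (hbound s hs2) (not_le.mpr hs1)
      exact this.exists.elim (fun _ h => h)
    · -- t ∉ T : the two sets are equal
      apply hne
      congr 1
      ext u
      simp only [mem_setOf_eq, mem_inter_iff, mem_Icc]
      constructor
      · intro ⟨huT, hut⟩
        exact ⟨⟨(hTsub huT).1, le_of_lt hut⟩, huT⟩
      · rintro ⟨⟨-, hut⟩, huT⟩
        exact ⟨huT, lt_of_le_of_ne hut (fun h => htT (h ▸ huT))⟩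
  -- a.e. equality
  have hcount : Set.Countable {x : ℝ | ¬ContinuousAt g x} :=
    hmono_g.countable_not_continuousAt
  have hnull : (volume : Measure ℝ) {x : ℝ | ¬ContinuousAt g x} = 0 :=
    hcount.measure_zero _
  have hae : (fun t => f (rhoBar T t)) =ᵐ[volume.restrict (Icc (0:ℝ) 1)]
      (fun t => f (g t)) := by
    apply ae_restrict_of_ae
    have h0 : ∀ᵐ t ∂(volume : Measure ℝ), ContinuousAt g t := by
      rw [ae_iff]; exact hnull
    filter_upwards [h0] with t ht
    have heq : rhoBar T t = g t := by
      by_contra h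
      exact hdisc t h ht
    rw [heq]
  have hfm : AEStronglyMeasurable f (Measure.map (rhoBar T) (volume.restrict (Icc (0:ℝ) 1))) := hf.1
  calc ∫ x, f x ∂(lamDelta T)
      = ∫ t in Icc (0:ℝ) 1, f (rhoBar T t) := by
        rw [lamDelta, integral_map hmono_rho.measurable.aemeasurable hfm]
    _ = ∫ t in Icc (0:ℝ) 1, f (g t) := integral_congr_ae hae
end

section
/- Let T be a closed subset of [0,1] containing 0 and 1. If h̃ ∈ H¹ (the classical Cameron–Martin space of absolutely continuous functions on [0,1] vanishing at 0 with square-integrable derivative), then its restriction J(h̃) to T belongs to H_T, i.e., there exists h^Δ ∈ L²(λ_Δ) such that h̃(t) = ∫_{[0,t)∩T} h^Δ(s) dλ_Δ(s) for all t ∈ T. Explicitly one may take h^Δ(t) = h̃'(t) for t ∈ T not right-scattered and h^Δ(t) = (h̃(σ̄(t)) − h̃(t))/(σ̄(t) − t) for t right-scattered. -/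
open MeasureTheory Set
open scoped ENNReal Classical

noncomputable def htilde (g : ℝ → ℝ) (t : ℝ) : ℝ := ∫ s in Ico (0:ℝ) t, g s

noncomputable def jDensity (T : Set ℝ) (g : ℝ → ℝ) (t : ℝ) : ℝ :=
  if sigmaBar T t = t then g t
  else (htilde g (sigmaBar T t) - htilde g t) / (sigmaBar T t - t)

noncomputable def gDot (T : Set ℝ) (hΔ : ℝ → ℝ) (s : ℝ) : ℝ :=
  if s ∈ T then hΔ s else hΔ (rhoBar T s)

/-!
`lamDelta T` is the image of Lebesgue measure on `[0, 1]` under `rhoBar T`, so integrating over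
`[0, t) ∩ T` against it means integrating `jDensity T g ∘ rhoBar T` over `[0, t)` in the
Lebesgue sense. The set `[0, t) \ T` is the disjoint union of the countably many gaps
`(a, sigmaBar T a)` of `T` below `t`; on such a gap `rhoBar T` is constantly `a`, and
`jDensity T g a` is the average of `g` over the gap, so the integrals agree there and Jensen's
inequality bounds the square integral by that of `g`. On `T` itself `rhoBar T` and `sigmaBar T`
fix all but countably many points, so `jDensity T g ∘ rhoBar T = g` almost everywhere. Since `g`
is only given almost everywhere, all of this is done for a measurable representative.
-/

lemma lintegral_enorm_setAverage_sq_le {α : Type*} [MeasurableSpace α] {μ : Measure α}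
    {s : Set α} {f : α → ℝ} (hs : μ s ≠ ∞) (hf : IntegrableOn f s μ)
    (hf2 : IntegrableOn (fun x => f x ^ 2) s μ) :
    ∫⁻ _ in s, ‖⨍ x in s, f x ∂μ‖ₑ ^ 2 ∂μ ≤ ∫⁻ x in s, ‖f x‖ₑ ^ 2 ∂μ := by
  have henorm (y : ℝ) : ‖y‖ₑ ^ 2 = ENNReal.ofReal (y ^ 2) := by
    rw [← enorm_pow, Real.enorm_eq_ofReal (sq_nonneg y)]
  rcases eq_or_ne (μ s) 0 with h0 | h0
  · simp [Measure.restrict_eq_zero.2 h0]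
  have jensen : (⨍ x in s, f x ∂μ) ^ 2 ≤ ⨍ x in s, f x ^ 2 ∂μ :=
    (even_two.convexOn_pow (𝕜 := ℝ)).map_set_average_le (continuous_pow 2).continuousOn
      isClosed_univ h0 hs (by simp) hf hf2
  calc ∫⁻ _ in s, ‖⨍ x in s, f x ∂μ‖ₑ ^ 2 ∂μ
      = ENNReal.ofReal (μ.real s) * ENNReal.ofReal ((⨍ x in s, f x ∂μ) ^ 2) := by
        rw [setLIntegral_const, henorm, mul_comm, measureReal_def, ENNReal.ofReal_toReal hs]
    _ ≤ ENNReal.ofReal (μ.real s) * ENNReal.ofReal (⨍ x in s, f x ^ 2 ∂μ) := by gcongr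
    _ = ENNReal.ofReal (∫ x in s, f x ^ 2 ∂μ) := by
        rw [← ENNReal.ofReal_mul measureReal_nonneg, ← smul_eq_mul, measure_smul_setAverage _ hs]
    _ = ∫⁻ x in s, ‖f x‖ₑ ^ 2 ∂μ := by
        rw [ofReal_integral_eq_lintegral_ofReal hf2 (ae_of_all _ fun x => sq_nonneg (f x))]
        simp only [henorm]

lemma MeasureTheory.IntegrableOn.exists_measurable_integrable_ae_eq {α : Type*}
    [MeasurableSpace α] {μ : Measure α} {s : Set α} {g : α → ℝ} (hs : MeasurableSet s)
    (hg : IntegrableOn g s μ) : ∃ g₀, Measurable g₀ ∧ Integrable g₀ μ ∧ g =ᵐ[μ.restrict s] g₀ := by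
  refine ⟨s.indicator (hg.1.mk g), hg.1.stronglyMeasurable_mk.measurable.indicator hs,
    (integrable_indicator_iff hs).2 (hg.congr hg.1.ae_eq_mk), ?_⟩
  filter_upwards [hg.1.ae_eq_mk, ae_restrict_mem hs] with x hx hxs
  rw [indicator_of_mem hxs, hx]

section

variable {T : Set ℝ} {a s t u : ℝ} {g g' : ℝ → ℝ}

lemma rhoBar_of_ne_zero (hs : s ≠ 0) : rhoBar T s = sSup {u | u ∈ T ∧ u < s} :=
  if_neg hs

lemma rhoBar_of_nonpos (hTsub : T ⊆ Icc 0 1) (hs : s ≤ 0) : rhoBar T s = 0 := by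
  rcases hs.eq_or_lt with rfl | hs
  · simp [rhoBar]
  · have hempty : {u | u ∈ T ∧ u < s} = ∅ :=
      eq_empty_of_forall_notMem fun u hu => (hu.2.trans hs).not_ge (hTsub hu.1).1
    rw [rhoBar_of_ne_zero hs.ne, hempty, Real.sSup_empty]

lemma le_rhoBar (hu : u ∈ T) (hus : u < s) : u ≤ rhoBar T s := by
  rcases eq_or_ne s 0 with rfl | hs
  · simpa [rhoBar] using hus.le
  · rw [rhoBar_of_ne_zero hs]
    exact le_csSup ⟨s, fun _ hv => hv.2.le⟩ ⟨hu, hus⟩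

lemma rhoBar_nonneg (hTsub : T ⊆ Icc 0 1) (h0T : (0:ℝ) ∈ T) (s : ℝ) : 0 ≤ rhoBar T s := by
  rcases le_or_gt s 0 with hs | hs
  · exact (rhoBar_of_nonpos hTsub hs).ge
  · exact le_rhoBar h0T hs

lemma rhoBar_le_self (h0T : (0:ℝ) ∈ T) (hs : 0 ≤ s) : rhoBar T s ≤ s := by
  rcases hs.eq_or_lt with rfl | hs
  · simp [rhoBar]
  · rw [rhoBar_of_ne_zero hs.ne']
    exact csSup_le ⟨0, h0T, hs⟩ fun _ hu => hu.2.le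

lemma rhoBar_mem (hT : IsClosed T) (h0T : (0:ℝ) ∈ T) (hs : 0 ≤ s) : rhoBar T s ∈ T := by
  rcases hs.eq_or_lt with rfl | hs
  · simpa [rhoBar] using h0T
  · rw [rhoBar_of_ne_zero hs.ne']
    exact hT.closure_subset_iff.2 (fun _ hu => hu.1)
      (csSup_mem_closure ⟨0, h0T, hs⟩ ⟨s, fun _ hu => hu.2.le⟩)

lemma measurable_rhoBar (hTsub : T ⊆ Icc 0 1) (h0T : (0:ℝ) ∈ T) : Measurable (rhoBar T) := by
  refine Monotone.measurable fun s s' hss' => ?_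
  rcases le_or_gt s 0 with hs | hs
  · exact (rhoBar_of_nonpos hTsub hs).trans_le (rhoBar_nonneg hTsub h0T s')
  · rw [rhoBar_of_ne_zero hs.ne', rhoBar_of_ne_zero (hs.trans_le hss').ne']
    exact csSup_le_csSup ⟨s', fun _ hu => hu.2.le⟩ ⟨0, h0T, hs⟩
      fun u hu => ⟨hu.1, hu.2.trans_le hss'⟩

lemma sigmaBar_of_ne_one (ht : t ≠ 1) : sigmaBar T t = sInf {u | u ∈ T ∧ t < u} :=
  if_neg ht

lemma sigmaBar_le (hTsub : T ⊆ Icc 0 1) (hu : u ∈ T) (htu : t < u) : sigmaBar T t ≤ u := by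
  rw [sigmaBar_of_ne_one (htu.trans_le (hTsub hu).2).ne]
  exact csInf_le ⟨0, fun _ hv => (hTsub hv.1).1⟩ ⟨hu, htu⟩

lemma le_sigmaBar (h1T : (1:ℝ) ∈ T) (ht : t ≤ 1) : t ≤ sigmaBar T t := by
  rcases ht.eq_or_lt with rfl | ht
  · simp [sigmaBar]
  · rw [sigmaBar_of_ne_one ht.ne]
    exact le_csInf ⟨1, h1T, ht⟩ fun _ hu => hu.2.le

lemma sigmaBar_le_one (hTsub : T ⊆ Icc 0 1) (h1T : (1:ℝ) ∈ T) (ht : t ≤ 1) :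
    sigmaBar T t ≤ 1 := by
  rcases ht.eq_or_lt with rfl | ht
  · simp [sigmaBar]
  · exact sigmaBar_le hTsub h1T ht

lemma sigmaBar_mem (hT : IsClosed T) (hTsub : T ⊆ Icc 0 1) (h1T : (1:ℝ) ∈ T) (ht : t ≤ 1) :
    sigmaBar T t ∈ T := by
  rcases ht.eq_or_lt with rfl | ht
  · simpa [sigmaBar] using h1T
  · rw [sigmaBar_of_ne_one ht.ne]
    exact hT.closure_subset_iff.2 (fun _ hu => hu.1)
      (csInf_mem_closure ⟨1, h1T, ht⟩ ⟨0, fun _ hu => (hTsub hu.1).1⟩)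

lemma monotoneOn_sigmaBar (hTsub : T ⊆ Icc 0 1) (h1T : (1:ℝ) ∈ T) :
    MonotoneOn (sigmaBar T) (Iic 1) := by
  intro t _ t' ht' htt'
  rcases (mem_Iic.1 ht').eq_or_lt with rfl | ht'
  · exact (sigmaBar_le_one hTsub h1T (mem_Iic.1 ‹_›)).trans (le_sigmaBar h1T le_rfl)
  · rw [sigmaBar_of_ne_one (htt'.trans_lt ht').ne, sigmaBar_of_ne_one ht'.ne]
    exact csInf_le_csInf ⟨0, fun _ hu => (hTsub hu.1).1⟩ ⟨1, h1T, ht'⟩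
      fun u hu => ⟨hu.1, htt'.trans_lt hu.2⟩

lemma measurable_sigmaBar (hTsub : T ⊆ Icc 0 1) (h1T : (1:ℝ) ∈ T) :
    Measurable (sigmaBar T) := by
  have hmono : Monotone fun t => sigmaBar T (min t 1) := fun t t' htt' =>
    monotoneOn_sigmaBar hTsub h1T (mem_Iic.2 (min_le_right _ _)) (mem_Iic.2 (min_le_right _ _))
      (min_le_min_right 1 htt')
  -- beyond `1` the infimum is over the empty set, so `sigmaBar T` vanishes there
  have heq : sigmaBar T = (Iic 1).piecewise (fun t => sigmaBar T (min t 1)) 0 := by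
    funext t
    by_cases ht : t ≤ 1
    · simp [ht]
    · have hempty : {u | u ∈ T ∧ t < u} = ∅ :=
        eq_empty_of_forall_notMem fun u hu => (not_le.1 ht).trans hu.2 |>.not_ge (hTsub hu.1).2
      simp [ht, sigmaBar_of_ne_one fun h => ht h.le, hempty]
  rw [heq]
  exact hmono.measurable.piecewise measurableSet_Iic measurable_const

lemma notMem_of_mem_Ioo_sigmaBar (hTsub : T ⊆ Icc 0 1) (hu : u ∈ Ioo t (sigmaBar T t)) :
    u ∉ T :=
  fun huT => (sigmaBar_le hTsub huT hu.1).not_gt hu.2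

lemma rhoBar_eq_of_mem_Ioo_sigmaBar (hTsub : T ⊆ Icc 0 1) (ha : a ∈ T)
    (hs : s ∈ Ioo a (sigmaBar T a)) : rhoBar T s = a := by
  refine le_antisymm ?_ (le_rhoBar ha hs.1)
  rw [rhoBar_of_ne_zero ((hTsub ha).1.trans_lt hs.1).ne']
  refine csSup_le ⟨a, ha, hs.1⟩ fun u hu => not_lt.1 fun hau => ?_
  exact notMem_of_mem_Ioo_sigmaBar hTsub ⟨hau, hu.2.trans hs.2⟩ hu.1

lemma le_sigmaBar_rhoBar (h1T : (1:ℝ) ∈ T) (hs : s ≤ 1) (h : rhoBar T s < s) :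
    s ≤ sigmaBar T (rhoBar T s) := by
  rw [sigmaBar_of_ne_one (h.trans_le hs).ne]
  exact le_csInf ⟨1, h1T, h.trans_le hs⟩ fun u hu =>
    not_lt.1 fun hus => (le_rhoBar hu.1 hus).not_gt hu.2

lemma sigmaBar_rhoBar_of_rhoBar_lt (hTsub : T ⊆ Icc 0 1) (h1T : (1:ℝ) ∈ T) (hs : s ∈ T)
    (h : rhoBar T s < s) : sigmaBar T (rhoBar T s) = s :=
  (sigmaBar_le hTsub hs h).antisymm (le_sigmaBar_rhoBar h1T (hTsub hs).2 h)

lemma rhoBar_eq_self_of_sigmaBar_rhoBar (h0T : (0:ℝ) ∈ T) (h1T : (1:ℝ) ∈ T)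
    (hs : s ∈ Icc 0 1) (hσ : sigmaBar T (rhoBar T s) = rhoBar T s) : rhoBar T s = s := by
  refine (rhoBar_le_self h0T hs.1).eq_of_not_lt fun h => ?_
  exact (hσ ▸ le_sigmaBar_rhoBar h1T hs.2 h).not_gt h

/-- Each right-scattered point is `rhoBar` of a rational in its gap. -/
lemma countable_setOf_lt_sigmaBar (hTsub : T ⊆ Icc 0 1) :
    {a | a ∈ T ∧ a < sigmaBar T a}.Countable := by
  refine (countable_range fun q : ℚ => rhoBar T q).mono ?_
  rintro a ⟨ha, haσ⟩
  obtain ⟨q, hq⟩ := exists_rat_btwn haσ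
  exact ⟨q, rhoBar_eq_of_mem_Ioo_sigmaBar hTsub ha hq⟩

lemma countable_setOf_rhoBar_lt (hT : IsClosed T) (hTsub : T ⊆ Icc 0 1) (h0T : (0:ℝ) ∈ T)
    (h1T : (1:ℝ) ∈ T) : {s | s ∈ T ∧ rhoBar T s < s}.Countable := by
  refine ((countable_setOf_lt_sigmaBar hTsub).image (sigmaBar T)).mono ?_
  rintro s ⟨hs, hρ⟩
  have hσ := sigmaBar_rhoBar_of_rhoBar_lt hTsub h1T hs hρ
  exact ⟨rhoBar T s, ⟨rhoBar_mem hT h0T (hTsub hs).1, by rw [hσ]; exact hρ⟩, hσ⟩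

lemma ae_rhoBar_eq_and_sigmaBar_eq (hT : IsClosed T) (hTsub : T ⊆ Icc 0 1) (h0T : (0:ℝ) ∈ T)
    (h1T : (1:ℝ) ∈ T) : ∀ᵐ s, s ∈ T → rhoBar T s = s ∧ sigmaBar T s = s := by
  have hnull := ((countable_setOf_lt_sigmaBar hTsub).union
    (countable_setOf_rhoBar_lt hT hTsub h0T h1T)).measure_zero volume
  filter_upwards [measure_eq_zero_iff_ae_notMem.1 hnull] with s hs hsT
  simp only [mem_union, mem_ofPred_eq, not_or, not_and, not_lt] at hs
  exact ⟨(rhoBar_le_self h0T (hTsub hsT).1).antisymm (hs.2 hsT),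
    (hs.1 hsT).antisymm (le_sigmaBar h1T (hTsub hsT).2)⟩

def gapsBelow (T : Set ℝ) (t : ℝ) : Set ℝ :=
  {a | a ∈ T ∧ a < sigmaBar T a ∧ sigmaBar T a ≤ t}

lemma countable_gapsBelow (hTsub : T ⊆ Icc 0 1) (t : ℝ) : (gapsBelow T t).Countable :=
  (countable_setOf_lt_sigmaBar hTsub).mono fun _ ha => And.intro ha.1 ha.2.1

lemma Ico_diff_eq_iUnion_gapsBelow (hT : IsClosed T) (hTsub : T ⊆ Icc 0 1) (h0T : (0:ℝ) ∈ T)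
    (h1T : (1:ℝ) ∈ T) (ht : t ∈ T) :
    Ico 0 t \ T = ⋃ a : gapsBelow T t, Ioo (a : ℝ) (sigmaBar T a) := by
  ext s
  simp only [mem_sdiff, mem_Ico, mem_iUnion, Subtype.exists, exists_prop]
  constructor
  · rintro ⟨⟨hs0, hst⟩, hsT⟩
    have hρT : rhoBar T s ∈ T := rhoBar_mem hT h0T hs0
    have hρs : rhoBar T s < s :=
      (rhoBar_le_self h0T hs0).lt_of_ne fun h => hsT (h ▸ hρT)
    have hs1 : s ≤ 1 := hst.le.trans (hTsub ht).2
    have hsσ : s < sigmaBar T (rhoBar T s) :=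
      (le_sigmaBar_rhoBar h1T hs1 hρs).lt_of_ne fun h =>
        hsT (h ▸ sigmaBar_mem hT hTsub h1T ((rhoBar_le_self h0T hs0).trans hs1))
    exact ⟨rhoBar T s, ⟨hρT, hρs.trans hsσ, sigmaBar_le hTsub ht (hρs.trans hst)⟩, hρs, hsσ⟩
  · rintro ⟨a, ⟨ha, -, hat⟩, has, hsσ⟩
    exact ⟨⟨(hTsub ha).1.trans has.le, hsσ.trans_le hat⟩,
      notMem_of_mem_Ioo_sigmaBar hTsub ⟨has, hsσ⟩⟩

lemma pairwise_disjoint_gapsBelow (hTsub : T ⊆ Icc 0 1) :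
    Pairwise (Function.onFun Disjoint fun a : gapsBelow T t => Ioo (a : ℝ) (sigmaBar T a)) := by
  suffices ∀ a b : gapsBelow T t, (a : ℝ) < b →
      Disjoint (Ioo (a : ℝ) (sigmaBar T a)) (Ioo (b : ℝ) (sigmaBar T b)) by
    intro a b hab
    rcases (Subtype.coe_injective.ne hab).lt_or_gt with h | h
    exacts [this a b h, (this b a h).symm]
  intro a b hab
  exact Set.disjoint_left.2 fun s hsa hsb =>
    (hsa.2.trans_le (sigmaBar_le hTsub b.2.1 hab)).not_gt hsb.1

lemma integral_Ico_eq_add_tsum_gapsBelow (hT : IsClosed T) (hTsub : T ⊆ Icc 0 1)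
    (h0T : (0:ℝ) ∈ T) (h1T : (1:ℝ) ∈ T) (ht : t ∈ T) {f : ℝ → ℝ}
    (hf : IntegrableOn f (Ico 0 t)) :
    ∫ x in Ico 0 t, f x = (∫ x in Ico 0 t ∩ T, f x) +
      ∑' a : gapsBelow T t, ∫ x in Ioo (a : ℝ) (sigmaBar T a), f x := by
  have := (countable_gapsBelow hTsub t).to_subtype
  have hgaps := Ico_diff_eq_iUnion_gapsBelow hT hTsub h0T h1T ht
  rw [← integral_inter_add_sdiff hT.measurableSet hf, hgaps,
    integral_iUnion (fun _ => measurableSet_Ioo) (pairwise_disjoint_gapsBelow hTsub)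
      (hgaps ▸ hf.mono_set sdiff_subset)]

lemma lintegral_Ico_eq_add_tsum_gapsBelow (hT : IsClosed T) (hTsub : T ⊆ Icc 0 1)
    (h0T : (0:ℝ) ∈ T) (h1T : (1:ℝ) ∈ T) (ht : t ∈ T) (f : ℝ → ℝ≥0∞) :
    ∫⁻ x in Ico 0 t, f x = (∫⁻ x in Ico 0 t ∩ T, f x) +
      ∑' a : gapsBelow T t, ∫⁻ x in Ioo (a : ℝ) (sigmaBar T a), f x := by
  have := (countable_gapsBelow hTsub t).to_subtype
  rw [← lintegral_inter_add_sdiff f _ hT.measurableSet,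
    Ico_diff_eq_iUnion_gapsBelow hT hTsub h0T h1T ht,
    lintegral_iUnion (fun _ => measurableSet_Ioo) (pairwise_disjoint_gapsBelow hTsub)]

lemma htilde_sub (hg : IntegrableOn g (Ico 0 t)) (hs : 0 ≤ s) (hst : s ≤ t) :
    htilde g t - htilde g s = ∫ x in Ioo s t, g x := by
  rw [htilde, htilde, ← Ico_union_Ico_eq_Ico hs hst,
    setIntegral_union (Ico_disjoint_Ico_same) measurableSet_Ico
      (hg.mono_set (Ico_subset_Ico_right hst)) (hg.mono_set (Ico_subset_Ico_left hs)),
    add_sub_cancel_left, integral_Ico_eq_integral_Ioo]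

lemma continuous_htilde (hg : Integrable g) : Continuous (htilde g) := by
  have hprim := (intervalIntegral.continuous_primitive (fun _ _ => hg.intervalIntegrable) 0).comp
    (continuous_id.max continuous_const : Continuous fun t : ℝ => max t 0)
  convert hprim using 1
  funext t
  rcases le_total t 0 with ht | ht
  · simp [htilde, ht]
  · simp [htilde, ht, intervalIntegral.integral_of_le, integral_Ico_eq_integral_Ioo,
      integral_Ioc_eq_integral_Ioo]

lemma measurable_jDensity (hTsub : T ⊆ Icc 0 1) (h1T : (1:ℝ) ∈ T) (hgm : Measurable g)
    (hgi : Integrable g) : Measurable (jDensity T g) := by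
  have hσ := measurable_sigmaBar hTsub h1T
  have hH := (continuous_htilde hgi).measurable
  exact Measurable.ite (measurableSet_eq_fun hσ measurable_id) hgm
    (((hH.comp hσ).sub hH).div (hσ.sub measurable_id))

lemma jDensity_rhoBar_eq_setAverage (hTsub : T ⊆ Icc 0 1) (ha : a ∈ T) (haσ : a < sigmaBar T a)
    (hg : IntegrableOn g (Ico 0 (sigmaBar T a))) (hs : s ∈ Ioo a (sigmaBar T a)) :
    jDensity T g (rhoBar T s) = ⨍ x in Ioo a (sigmaBar T a), g x := by
  rw [rhoBar_eq_of_mem_Ioo_sigmaBar hTsub ha hs, jDensity, if_neg haσ.ne',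
    htilde_sub hg (hTsub ha).1 haσ.le, setAverage_eq, Real.volume_real_Ioo_of_le haσ.le,
    smul_eq_mul, div_eq_inv_mul]

lemma ae_jDensity_rhoBar_eq (hT : IsClosed T) (hTsub : T ⊆ Icc 0 1) (h0T : (0:ℝ) ∈ T)
    (h1T : (1:ℝ) ∈ T) : ∀ᵐ s, s ∈ T → jDensity T g (rhoBar T s) = g s := by
  filter_upwards [ae_rhoBar_eq_and_sigmaBar_eq hT hTsub h0T h1T] with s hs hsT
  obtain ⟨hρ, hσ⟩ := hs hsT
  rw [hρ, jDensity, if_pos hσ]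

lemma setIntegral_gap_jDensity_rhoBar (hTsub : T ⊆ Icc 0 1) (ha : a ∈ T)
    (haσ : a < sigmaBar T a) (hg : IntegrableOn g (Ico 0 (sigmaBar T a))) :
    ∫ s in Ioo a (sigmaBar T a), jDensity T g (rhoBar T s) = ∫ s in Ioo a (sigmaBar T a), g s := by
  rw [setIntegral_congr_fun measurableSet_Ioo
      fun s hs => jDensity_rhoBar_eq_setAverage hTsub ha haσ hg hs,
    setIntegral_const, measure_smul_setAverage _ measure_Ioo_lt_top.ne]

lemma lintegral_gap_jDensity_rhoBar_sq_le (hTsub : T ⊆ Icc 0 1) (ha : a ∈ T)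
    (haσ : a < sigmaBar T a) (hg : IntegrableOn g (Ico 0 (sigmaBar T a)))
    (hg2 : IntegrableOn (fun s => g s ^ 2) (Ioo a (sigmaBar T a))) :
    ∫⁻ s in Ioo a (sigmaBar T a), ‖jDensity T g (rhoBar T s)‖ₑ ^ 2 ≤
      ∫⁻ s in Ioo a (sigmaBar T a), ‖g s‖ₑ ^ 2 := by
  rw [setLIntegral_congr_fun measurableSet_Ioo
      fun s hs => by rw [jDensity_rhoBar_eq_setAverage hTsub ha haσ hg hs]]
  exact lintegral_enorm_setAverage_sq_le measure_Ioo_lt_top.ne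
    (hg.mono_set (Ioo_subset_Ico_self.trans (Ico_subset_Ico_left (hTsub ha).1))) hg2

lemma setIntegral_jDensity_rhoBar (hT : IsClosed T) (hTsub : T ⊆ Icc 0 1) (h0T : (0:ℝ) ∈ T)
    (h1T : (1:ℝ) ∈ T) (hg : IntegrableOn g (Icc 0 1))
    (hF : IntegrableOn (fun s => jDensity T g (rhoBar T s)) (Icc 0 1)) (ht : t ∈ T) :
    ∫ s in Ico 0 t, jDensity T g (rhoBar T s) = htilde g t := by
  have hsub : Ico 0 t ⊆ Icc 0 1 := Ico_subset_Icc_self.trans (Icc_subset_Icc_right (hTsub ht).2)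
  rw [htilde, integral_Ico_eq_add_tsum_gapsBelow hT hTsub h0T h1T ht (hF.mono_set hsub),
    integral_Ico_eq_add_tsum_gapsBelow hT hTsub h0T h1T ht (hg.mono_set hsub)]
  congr 1
  · exact setIntegral_congr_ae (measurableSet_Ico.inter hT.measurableSet)
      (by filter_upwards [ae_jDensity_rhoBar_eq hT hTsub h0T h1T] with s hs hsT using hs hsT.2)
  · exact tsum_congr fun ⟨a, ha, haσ, hat⟩ => setIntegral_gap_jDensity_rhoBar hTsub ha haσ
      (hg.mono_set (Ico_subset_Icc_self.trans (Icc_subset_Icc_right (hat.trans (hTsub ht).2))))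

lemma lintegral_jDensity_rhoBar_sq_le (hT : IsClosed T) (hTsub : T ⊆ Icc 0 1)
    (h0T : (0:ℝ) ∈ T) (h1T : (1:ℝ) ∈ T) (hg : IntegrableOn g (Icc 0 1))
    (hg2 : IntegrableOn (fun s => g s ^ 2) (Icc 0 1)) :
    ∫⁻ s in Ico 0 1, ‖jDensity T g (rhoBar T s)‖ₑ ^ 2 ≤ ∫⁻ s in Ico 0 1, ‖g s‖ₑ ^ 2 := by
  rw [lintegral_Ico_eq_add_tsum_gapsBelow hT hTsub h0T h1T h1T,
    lintegral_Ico_eq_add_tsum_gapsBelow hT hTsub h0T h1T h1T]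
  gcongr ?_ + ?_
  · refine (setLIntegral_congr_fun_ae (measurableSet_Ico.inter hT.measurableSet) ?_).le
    filter_upwards [ae_jDensity_rhoBar_eq hT hTsub h0T h1T] with s hs hsT
    rw [hs hsT.2]
  · refine ENNReal.tsum_le_tsum fun ⟨a, ha, haσ, hat⟩ => ?_
    have hgap : Ioo a (sigmaBar T a) ⊆ Icc 0 1 :=
      Ioo_subset_Icc_self.trans (Icc_subset_Icc (hTsub ha).1 hat)
    exact lintegral_gap_jDensity_rhoBar_sq_le hTsub ha haσ
      (hg.mono_set (Ico_subset_Icc_self.trans (Icc_subset_Icc_right hat))) (hg2.mono_set hgap)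

lemma memLp_jDensity_rhoBar (hT : IsClosed T) (hTsub : T ⊆ Icc 0 1) (h0T : (0:ℝ) ∈ T)
    (h1T : (1:ℝ) ∈ T) (hgm : Measurable g) (hgi : Integrable g)
    (hg2 : MemLp g 2 (volume.restrict (Icc 0 1))) :
    MemLp (fun s => jDensity T g (rhoBar T s)) 2 (volume.restrict (Icc 0 1)) := by
  have hFm := (measurable_jDensity hTsub h1T hgm hgi).comp (measurable_rhoBar hTsub h0T)
  have hg2i := (memLp_two_iff_integrable_sq hg2.1).1 hg2
  refine (memLp_two_iff_integrable_sq hFm.aestronglyMeasurable).2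
    ⟨(hFm.pow_const 2).aestronglyMeasurable, ?_⟩
  have hfin : ∫⁻ s in Icc 0 1, ‖g s ^ 2‖ₑ < ∞ := hg2i.2
  show ∫⁻ s in Icc 0 1, ‖jDensity T g (rhoBar T s) ^ 2‖ₑ < ∞
  simp only [enorm_pow, ← Measure.restrict_congr_set Ico_ae_eq_Icc] at hfin ⊢
  exact (lintegral_jDensity_rhoBar_sq_le hT hTsub h0T h1T hgi.integrableOn hg2i).trans_lt hfin

lemma rhoBar_preimage_Ico_inter_ae_eq (hT : IsClosed T) (hTsub : T ⊆ Icc 0 1)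
    (h0T : (0:ℝ) ∈ T) (ht : t ∈ T) :
    rhoBar T ⁻¹' (Ico 0 t ∩ T) =ᵐ[volume.restrict (Icc 0 1)] Ico 0 t := by
  filter_upwards [ae_restrict_mem measurableSet_Icc,
    ae_restrict_of_ae (measure_eq_zero_iff_ae_notMem.1 (measure_singleton t))] with s hs hst
  refine propext ⟨fun ⟨⟨_, hρt⟩, _⟩ => ⟨hs.1, lt_of_not_ge fun hts => ?_⟩, fun hs' => ?_⟩
  · exact (le_rhoBar ht (hts.lt_of_ne' hst)).not_gt hρt
  · exact ⟨⟨rhoBar_nonneg hTsub h0T s, (rhoBar_le_self h0T hs.1).trans_lt hs'.2⟩,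
      rhoBar_mem hT h0T hs.1⟩

lemma setIntegral_lamDelta (hT : IsClosed T) (hTsub : T ⊆ Icc 0 1) (h0T : (0:ℝ) ∈ T)
    (ht : t ∈ T) {f : ℝ → ℝ} (hf : AEStronglyMeasurable f (lamDelta T)) :
    ∫ s in Ico 0 t ∩ T, f s ∂lamDelta T = ∫ s in Ico 0 t, f (rhoBar T s) := by
  rw [lamDelta, setIntegral_map (measurableSet_Ico.inter hT.measurableSet) hf
      (measurable_rhoBar hTsub h0T).aemeasurable,
    setIntegral_congr_set (rhoBar_preimage_Ico_inter_ae_eq hT hTsub h0T ht),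
    Measure.restrict_restrict measurableSet_Ico,
    inter_eq_left.2 (Ico_subset_Icc_self.trans (Icc_subset_Icc_right (hTsub ht).2))]

/-- At right-dense points `rhoBar T` is the identity, so there `lamDelta T` only sees
Lebesgue-null sets. -/
lemma ae_lamDelta_of_ae (hTsub : T ⊆ Icc 0 1) (h0T : (0:ℝ) ∈ T) (h1T : (1:ℝ) ∈ T)
    {p : ℝ → Prop} (h : ∀ᵐ s ∂volume.restrict (Icc 0 1), p s) :
    ∀ᵐ t ∂lamDelta T, t ∈ Icc 0 1 ∧ (sigmaBar T t = t → p t) := by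
  obtain ⟨S, hSae, hSm, hSp⟩ := h.exists_measurable_mem
  have hmeas : MeasurableSet {t | t ∈ Icc 0 1 ∧ (sigmaBar T t = t → t ∈ S)} :=
    measurableSet_Icc.inter
      ((measurableSet_eq_fun (measurable_sigmaBar hTsub h1T) measurable_id).himp hSm)
  have hρ : ∀ᵐ s ∂volume.restrict (Icc 0 1),
      rhoBar T s ∈ Icc 0 1 ∧ (sigmaBar T (rhoBar T s) = rhoBar T s → rhoBar T s ∈ S) := by
    filter_upwards [ae_restrict_mem measurableSet_Icc, hSae] with s hs hsS
    refine ⟨⟨rhoBar_nonneg hTsub h0T s, (rhoBar_le_self h0T hs.1).trans hs.2⟩, fun hσ => ?_⟩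
    rwa [rhoBar_eq_self_of_sigmaBar_rhoBar h0T h1T hs hσ]
  filter_upwards [(ae_map_iff (measurable_rhoBar hTsub h0T).aemeasurable hmeas).2 hρ]
    with t ht using ⟨ht.1, fun hσ => hSp t (ht.2 hσ)⟩

lemma htilde_congr_ae (h : g =ᵐ[volume.restrict (Icc 0 1)] g') (ht : t ≤ 1) :
    htilde g t = htilde g' t :=
  integral_congr_ae (ae_restrict_of_ae_restrict_of_subset
    (Ico_subset_Icc_self.trans (Icc_subset_Icc_right ht)) h)

lemma jDensity_ae_congr (hTsub : T ⊆ Icc 0 1) (h0T : (0:ℝ) ∈ T) (h1T : (1:ℝ) ∈ T)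
    (h : g =ᵐ[volume.restrict (Icc 0 1)] g') : jDensity T g =ᵐ[lamDelta T] jDensity T g' := by
  filter_upwards [ae_lamDelta_of_ae hTsub h0T h1T h] with t ⟨ht, hσ⟩
  by_cases h' : sigmaBar T t = t
  · simp only [jDensity, if_pos h', hσ h']
  · simp only [jDensity, if_neg h', htilde_congr_ae h ht.2,
      htilde_congr_ae h (sigmaBar_le_one hTsub h1T ht.2)]

end

theorem stmt_9 (T : Set ℝ) (hT : IsClosed T) (hTsub : T ⊆ Icc 0 1)
    (h0T : (0:ℝ) ∈ T) (h1T : (1:ℝ) ∈ T)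
    (g : ℝ → ℝ) (hg : MemLp g 2 (volume.restrict (Icc 0 1))) :
    MemLp (jDensity T g) 2 (lamDelta T) ∧
    ∀ t ∈ T, htilde g t = ∫ s in Ico (0:ℝ) t ∩ T, jDensity T g s ∂(lamDelta T) := by
  obtain ⟨g₀, hg₀m, hg₀i, hgg₀⟩ :=
    IntegrableOn.exists_measurable_integrable_ae_eq measurableSet_Icc (hg.integrable one_le_two)
  have hJ := jDensity_ae_congr hTsub h0T h1T hgg₀
  have hJm := (measurable_jDensity hTsub h1T hg₀m hg₀i).aestronglyMeasurable (μ := lamDelta T)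
  have hF := memLp_jDensity_rhoBar hT hTsub h0T h1T hg₀m hg₀i (hg.ae_eq hgg₀)
  refine ⟨?_, fun t ht => ?_⟩
  · rw [memLp_congr_ae hJ, lamDelta, memLp_map_measure_iff hJm
      (measurable_rhoBar hTsub h0T).aemeasurable]
    exact hF
  · rw [integral_congr_ae (ae_restrict_of_ae hJ), setIntegral_lamDelta hT hTsub h0T ht hJm,
      setIntegral_jDensity_rhoBar hT hTsub h0T h1T hg₀i.integrableOn (hF.integrable one_le_two) ht,
      htilde_congr_ae hgg₀ (hTsub ht).2]
end
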